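/- Let a1, ..., a6 be real numbers and set a7 = a4 + a5 − a6 and a8 = a1 + a2 + a3 − a4 − a5. Assume a1, ..., a6, a7, a8 are all nonnegative and that the eight numbers a1, a2, a3, a4, a5, a6, a7, a8 are pairwise distinct. Then the nine numbers α1 = 0, α2 = −2a1−2a2−a4−a5, α3 = −2a1−2a3−a4−a5, α4 = −2a2−2a3−a4−a5, α5 = −2a1−2a2−2a3+a4−a5, α6 = −2a1−2a2−2a3−a4+a5, α7 = −3(a4+a5), α8 = −2a1−2a2−2a3+a4+a5−2a6, α9 = −2a1−2a2−2a3−a4−a5+2a6 are pairwise distinct. -/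

import Mathlib

/-!
With `s = a1 + a2 + a3` and `β = -2 s - a4 - a5`, the eigenvalues `α2, …, α9` are
`β + 2 a3, β + 2 a2, β + 2 a1, β + 2 a4, β + 2 a5, β + 2 a8, β + 2 a7, β + 2 a6`,
so they are distinct because the `ai` are. Nonnegativity gives `ai ≤ s` for all eight numbers,
and `a4 + a5 > 0` since `a4 ≠ a5`; hence every `α2, …, α9` is at most `-(a4 + a5) < 0 = α1`.
-/

theorem List.nodup_cons_map_of_injective {α β : Type*} {f : α → β} {l : List α} {b : β}
    (hf : Function.Injective f) (hl : l.Nodup) (hb : ∀ x ∈ l, f x ≠ b) :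
    (b :: l.map f).Nodup := by
  refine List.nodup_cons.2 ⟨fun hmem => ?_, hl.map hf⟩
  obtain ⟨x, hx, rfl⟩ := List.mem_map.1 hmem
  exact hb x hx rfl

theorem List.reverse_append_append_reverse_perm {α : Type*} (l₁ l₂ l₃ : List α) :
    (l₁.reverse ++ l₂ ++ l₃.reverse).Perm (l₁ ++ l₂ ++ l₃) :=
  ((List.reverse_perm l₁).append (List.Perm.refl l₂)).append (List.reverse_perm l₃)

section Eigenvalues

variable {a1 a2 a3 a4 a5 a6 a7 a8 : ℝ}

theorem eigenvalues_tail_eq_map (h7 : a7 = a4 + a5 - a6) (h8 : a8 = a1 + a2 + a3 - a4 - a5) :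
    [-2 * a1 - 2 * a2 - a4 - a5,
     -2 * a1 - 2 * a3 - a4 - a5,
     -2 * a2 - 2 * a3 - a4 - a5,
     -2 * a1 - 2 * a2 - 2 * a3 + a4 - a5,
     -2 * a1 - 2 * a2 - 2 * a3 - a4 + a5,
     -3 * (a4 + a5),
     -2 * a1 - 2 * a2 - 2 * a3 + a4 + a5 - 2 * a6,
     -2 * a1 - 2 * a2 - 2 * a3 - a4 - a5 + 2 * a6] =
      [a3, a2, a1, a4, a5, a8, a7, a6].map
        (fun x => -2 * (a1 + a2 + a3) - a4 - a5 + 2 * x) := by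
  subst h7 h8
  simp only [List.map_cons, List.map_nil, List.cons.injEq, and_true]
  refine ⟨?_, ?_, ?_, ?_, ?_, ?_, ?_, ?_⟩ <;> ring

theorem le_add_add_of_mem_weights (h7 : a7 = a4 + a5 - a6) (h8 : a8 = a1 + a2 + a3 - a4 - a5)
    (h1 : 0 ≤ a1) (h2 : 0 ≤ a2) (h3 : 0 ≤ a3) (h4 : 0 ≤ a4)
    (h5 : 0 ≤ a5) (h6 : 0 ≤ a6) (h7' : 0 ≤ a7) (h8' : 0 ≤ a8) :
    ∀ x ∈ [a3, a2, a1, a4, a5, a8, a7, a6], x ≤ a1 + a2 + a3 := by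
  simp only [List.mem_cons, List.not_mem_nil, or_false]
  rintro x (rfl | rfl | rfl | rfl | rfl | rfl | rfl | rfl) <;> linarith

end Eigenvalues

theorem eigenvalues_pairwise_distinct (a1 a2 a3 a4 a5 a6 a7 a8 : ℝ)
    (h7 : a7 = a4 + a5 - a6) (h8 : a8 = a1 + a2 + a3 - a4 - a5)
    (h1 : 0 ≤ a1) (h2 : 0 ≤ a2) (h3 : 0 ≤ a3) (h4 : 0 ≤ a4)
    (h5 : 0 ≤ a5) (h6 : 0 ≤ a6) (h7' : 0 ≤ a7) (h8' : 0 ≤ a8)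
    (hdist : List.Pairwise (· ≠ ·) [a1, a2, a3, a4, a5, a6, a7, a8]) :
    List.Pairwise (· ≠ ·)
      [(0 : ℝ),
       -2 * a1 - 2 * a2 - a4 - a5,
       -2 * a1 - 2 * a3 - a4 - a5,
       -2 * a2 - 2 * a3 - a4 - a5,
       -2 * a1 - 2 * a2 - 2 * a3 + a4 - a5,
       -2 * a1 - 2 * a2 - 2 * a3 - a4 + a5,
       -3 * (a4 + a5),
       -2 * a1 - 2 * a2 - 2 * a3 + a4 + a5 - 2 * a6,
       -2 * a1 - 2 * a2 - 2 * a3 - a4 - a5 + 2 * a6] := by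
  have h45 : a4 ≠ a5 := by simp_all
  have hpos : 0 < a4 + a5 := by
    by_contra! h
    exact h45 (by linarith)
  rw [eigenvalues_tail_eq_map h7 h8]
  refine List.nodup_cons_map_of_injective (fun x y hxy => by linarith)
    (List.Nodup.perm hdist
      (List.reverse_append_append_reverse_perm [a1, a2, a3] [a4, a5] [a6, a7, a8]).symm)
    fun x hx => ?_
  have hx := le_add_add_of_mem_weights h7 h8 h1 h2 h3 h4 h5 h6 h7' h8' x hx
  linarith
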